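/- (Kreĭn) Let S be a positive, closed, densely defined symmetric operator on a complex Hilbert space H with Cayley transform T = (I−S)(I+S)^{-1} on dom(T) = ran(I+S). Then the Cayley transform is a bijection from the set 𝒮 of all positive selfadjoint operators S̃ on H extending S onto the set 𝒯 of all everywhere-defined selfadjoint contractions T̃ on H with T̃|dom(T) = T. -/

import Mathlib

/-!
For a positive selfadjoint `S̃`, positivity gives `‖x‖, ‖S̃ x‖ ≤ ‖x + S̃ x‖` and
`‖x - S̃ x‖ ≤ ‖x + S̃ x‖`. The first bound makes `ran (I + S̃)` closed (it is the image of the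
complete graph under a map bounded below), selfadjointness makes it dense, so `x + S̃ x ↦ x - S̃ x`
is an everywhere defined contraction, selfadjoint because `S̃` is symmetric, and unique.

Conversely, for a selfadjoint contraction `T̃` extending `C(S)`, density of `dom S` forces
`ker (I + T̃) = 0`, so `{(a, b) | T̃ (a + b) = a - b}` is the graph of an operator. Polarization
`4 re ⟪a, b⟫ = ‖a + b‖² - ‖a - b‖²` together with `‖T̃‖ ≤ 1` makes it positive, and `T̃ = T̃*`
makes it selfadjoint. It contains every operator whose Cayley transform is `T̃`, so uniqueness
follows from the maximality of selfadjoint operators among symmetric ones.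
-/

open scoped InnerProductSpace ComplexOrder
open Filter Topology

noncomputable section

variable {H : Type*} [NormedAddCommGroup H] [InnerProductSpace ℂ H] [CompleteSpace H]

open RCLike

section InnerProductSpace

variable {𝕜 E : Type*} [RCLike 𝕜] [NormedAddCommGroup E] [InnerProductSpace 𝕜 E]

theorem norm_le_norm_add_of_re_inner_nonneg {x y : E} (h : 0 ≤ re ⟪x, y⟫_𝕜) :
    ‖x‖ ≤ ‖x + y‖ := by
  rw [← sq_le_sq₀ (norm_nonneg _) (norm_nonneg _), norm_add_sq (𝕜 := 𝕜)]
  linarith [sq_nonneg ‖y‖]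

theorem norm_sub_le_norm_add_iff {x y : E} : ‖x - y‖ ≤ ‖x + y‖ ↔ 0 ≤ re ⟪x, y⟫_𝕜 := by
  rw [← sq_le_sq₀ (norm_nonneg _) (norm_nonneg _), norm_add_sq (𝕜 := 𝕜), norm_sub_sq (𝕜 := 𝕜)]
  constructor <;> intro h <;> linarith

theorem inner_sub_add_eq_inner_add_sub_iff (a b c d : E) :
    ⟪a - b, c + d⟫_𝕜 = ⟪a + b, c - d⟫_𝕜 ↔ ⟪b, c⟫_𝕜 = ⟪a, d⟫_𝕜 := by
  simp only [inner_sub_left, inner_add_left, inner_add_right, inner_sub_right]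
  exact ⟨fun h => by linear_combination (-1 / 2 : 𝕜) * h,
    fun h => by linear_combination (-2 : 𝕜) * h⟩

end InnerProductSpace

section Normed

variable {𝕜 D E F : Type*} [NontriviallyNormedField 𝕜] [AddCommGroup D] [Module 𝕜 D]
  [SeminormedAddCommGroup E] [NormedSpace 𝕜 E] [NormedAddCommGroup F] [NormedSpace 𝕜 F]

theorem LinearMap.exists_norm_le_one_comp_eq (f : D →ₗ[𝕜] E) (g : D →ₗ[𝕜] F)
    (hf : Function.Surjective f) (hfg : ∀ x, ‖g x‖ ≤ ‖f x‖) :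
    ∃ T : E →L[𝕜] F, ‖T‖ ≤ 1 ∧ ∀ x, T (f x) = g x := by
  obtain ⟨s, hs⟩ := f.exists_rightInverse_of_surjective (LinearMap.range_eq_top.mpr hf)
  have hbound : ∀ y, ‖(g ∘ₗ s) y‖ ≤ 1 * ‖y‖ := fun y => by
    simpa [← LinearMap.comp_apply f s, hs] using hfg (s y)
  refine ⟨(g ∘ₗ s).mkContinuous 1 hbound, LinearMap.mkContinuous_norm_le _ zero_le_one _,
    fun x => ?_⟩
  have hker : f (s (f x) - x) = 0 := by
    rw [map_sub, ← LinearMap.comp_apply f s, hs, LinearMap.id_apply, sub_self]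
  have := hfg (s (f x) - x)
  rw [hker, norm_zero, norm_le_zero_iff, map_sub, sub_eq_zero] at this
  exact this

end Normed

namespace LinearPMap

section Module

variable {R E F : Type*} [Ring R] [AddCommGroup E] [Module R E] [AddCommGroup F] [Module R F]
  {A : E →ₗ.[R] F}

theorem forall_mem_graph_iff {P : E → F → Prop} :
    (∀ p ∈ A.graph, P p.1 p.2) ↔ ∀ x : A.domain, P x (A x) := by
  simp only [mem_graph_iff]
  constructor
  · exact fun h x => h ((x : E), A x) ⟨x, rfl, rfl⟩
  · rintro h p ⟨x, hx1, hx2⟩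
    simpa [← hx1, ← hx2] using h x

theorem forall_of_le {S : E →ₗ.[R] F} (h : S ≤ A) {P : E → F → Prop}
    (hA : ∀ x : A.domain, P x (A x)) : ∀ x : S.domain, P x (S x) := fun x => by
  rw [h.2 (y := ⟨x, h.1 x.2⟩) rfl]
  exact hA ⟨x, h.1 x.2⟩

end Module

variable {𝕜 E : Type*} [RCLike 𝕜] [NormedAddCommGroup E] [InnerProductSpace 𝕜 E]
  {A : E →ₗ.[𝕜] E}

def IsAccretive (A : E →ₗ.[𝕜] E) : Prop :=
  ∀ x : A.domain, 0 ≤ re ⟪(x : E), A x⟫_𝕜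

theorem IsAccretive.re_inner_nonneg_of_mem_graph (hA : A.IsAccretive) {p : E × E}
    (hp : p ∈ A.graph) : 0 ≤ re ⟪p.1, p.2⟫_𝕜 :=
  forall_mem_graph_iff (P := fun a b => 0 ≤ re ⟪a, b⟫_𝕜) |>.mpr hA p hp

theorem _root_.IsSelfAdjoint.isFormalAdjoint [CompleteSpace E] (hA : IsSelfAdjoint A) :
    A.IsFormalAdjoint A := by
  have := A.adjoint_isFormalAdjoint hA.dense_domain
  rwa [isSelfAdjoint_def.mp hA] at this

theorem IsFormalAdjoint.isAccretive_iff (hA : A.IsFormalAdjoint A) :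
    A.IsAccretive ↔ ∀ x : A.domain, 0 ≤ ⟪A x, (x : E)⟫_𝕜 := by
  refine forall_congr' fun x => ?_
  have him : im ⟪A x, (x : E)⟫_𝕜 = 0 := conj_eq_iff_im.mp (by rw [inner_conj_symm, hA x x])
  rw [RCLike.nonneg_iff (z := ⟪A x, (x : E)⟫_𝕜), him, inner_re_symm]
  exact (and_iff_left rfl).symm

theorem _root_.IsSelfAdjoint.eq_of_le [CompleteSpace E] {B : E →ₗ.[𝕜] E}
    (hA : IsSelfAdjoint A) (hB : IsSelfAdjoint B) (h : A ≤ B) : A = B := by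
  refine le_antisymm h ?_
  have hBA : A.IsFormalAdjoint B := fun x y => by
    rw [h.2 (y := ⟨x, h.1 x.2⟩) rfl]
    exact hB.isFormalAdjoint _ y
  simpa only [isSelfAdjoint_def.mp hA] using hBA.le_adjoint hA.dense_domain

variable (A) in
def graphAdd : A.graph →L[𝕜] E :=
  (ContinuousLinearMap.fst 𝕜 E E + ContinuousLinearMap.snd 𝕜 E E).comp A.graph.subtypeL

@[simp]
theorem graphAdd_apply (p : A.graph) : A.graphAdd p = (p : E × E).1 + (p : E × E).2 := rfl

theorem norm_le_norm_graphAdd (hAacc : A.IsAccretive) (p : A.graph) : ‖p‖ ≤ ‖A.graphAdd p‖ := by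
  obtain ⟨p, hp⟩ := p
  have hre := hAacc.re_inner_nonneg_of_mem_graph hp
  rw [graphAdd_apply, Submodule.coe_norm, Prod.norm_def, max_le_iff]
  refine ⟨norm_le_norm_add_of_re_inner_nonneg hre, ?_⟩
  rw [add_comm]
  exact norm_le_norm_add_of_re_inner_nonneg (𝕜 := 𝕜) (by rwa [inner_re_symm])

theorem isClosed_range_graphAdd [CompleteSpace E] (hA : A.IsClosed) (hAacc : A.IsAccretive) :
    _root_.IsClosed ((A.graphAdd : A.graph →ₗ[𝕜] E).range : Set E) := by
  have : CompleteSpace A.graph := hA.completeSpace_coe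
  rw [LinearMap.coe_range]
  exact (A.graphAdd.antilipschitz_of_bound (K := 1) fun p => by
    simpa using norm_le_norm_graphAdd hAacc p).isClosed_range A.graphAdd.uniformContinuous

theorem mem_graph_adjoint_iff [CompleteSpace E] (hA : Dense (A.domain : Set E)) {k w : E} :
    (k, w) ∈ A†.graph ↔ ∀ p ∈ A.graph, ⟪p.2, k⟫_𝕜 = ⟪p.1, w⟫_𝕜 := by
  simp only [adjoint_graph_eq_graph_adjoint hA, Submodule.mem_adjoint_iff, sub_eq_zero]
  exact ⟨fun h p => h p.1 p.2, fun h a b => h (a, b)⟩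

theorem surjective_graphAdd [CompleteSpace E] (hA : IsSelfAdjoint A) (hAacc : A.IsAccretive) :
    Function.Surjective A.graphAdd := by
  have hclosed := isClosed_range_graphAdd hA.isClosed hAacc
  change Function.Surjective (A.graphAdd : A.graph →ₗ[𝕜] E)
  rw [← LinearMap.range_eq_top, ← hclosed.submodule_topologicalClosure_eq,
    Submodule.topologicalClosure_eq_top_iff, Submodule.eq_bot_iff]
  intro k hk
  have hgraph : (k, -k) ∈ A.graph := by
    rw [← isSelfAdjoint_def.mp hA, mem_graph_adjoint_iff hA.dense_domain]
    intro p hp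
    have := (Submodule.mem_orthogonal _ k).mp hk _ ⟨⟨p, hp⟩, rfl⟩
    simp only [ContinuousLinearMap.coe_coe, graphAdd_apply, inner_add_left] at this
    rw [inner_neg_right]
    linear_combination this
  have := norm_le_norm_graphAdd hAacc ⟨_, hgraph⟩
  simpa using this

theorem exists_add_apply_eq [CompleteSpace E] (hA : IsSelfAdjoint A) (hAacc : A.IsAccretive)
    (u : E) : ∃ x : A.domain, (x : E) + A x = u := by
  obtain ⟨⟨p, hp⟩, rfl⟩ := surjective_graphAdd hA hAacc u
  obtain ⟨x, h1, h2⟩ := (mem_graph_iff _).mp hp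
  exact ⟨x, by simp [h1, h2]⟩

theorem exists_cayley [CompleteSpace E] (hA : IsSelfAdjoint A) (hAacc : A.IsAccretive) :
    ∃ C : E →L[𝕜] E, IsSelfAdjoint C ∧ ‖C‖ ≤ 1 ∧ ∀ x : A.domain, C (x + A x) = x - A x := by
  let g : A.graph →ₗ[𝕜] E := (LinearMap.fst 𝕜 E E - LinearMap.snd 𝕜 E E) ∘ₗ A.graph.subtype
  have hg : ∀ p, ‖g p‖ ≤ ‖A.graphAdd p‖ := fun ⟨p, hp⟩ =>
    norm_sub_le_norm_add_iff.mpr (hAacc.re_inner_nonneg_of_mem_graph hp)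
  obtain ⟨C, hCnorm, hC⟩ :=
    LinearMap.exists_norm_le_one_comp_eq _ g (surjective_graphAdd hA hAacc) hg
  have hCA : ∀ x : A.domain, C (x + A x) = x - A x := fun x => hC ⟨_, A.mem_graph x⟩
  refine ⟨C, ?_, hCnorm, hCA⟩
  rw [ContinuousLinearMap.isSelfAdjoint_iff_isSymmetric]
  intro u v
  obtain ⟨x, rfl⟩ := exists_add_apply_eq hA hAacc u
  obtain ⟨y, rfl⟩ := exists_add_apply_eq hA hAacc v
  simp only [ContinuousLinearMap.coe_coe, hCA]
  exact (inner_sub_add_eq_inner_add_sub_iff _ _ _ _).mpr (hA.isFormalAdjoint x y)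

theorem cayley_unique [CompleteSpace E] (hA : IsSelfAdjoint A) (hAacc : A.IsAccretive)
    {C C' : E →L[𝕜] E}
    (hC : ∀ x : A.domain, C (x + A x) = x - A x) (hC' : ∀ x : A.domain, C' (x + A x) = x - A x) :
    C = C' := by
  ext u
  obtain ⟨x, rfl⟩ := exists_add_apply_eq hA hAacc u
  rw [hC, hC']

end LinearPMap

namespace ContinuousLinearMap

variable {𝕜 E : Type*} [RCLike 𝕜] [NormedAddCommGroup E] [InnerProductSpace 𝕜 E]
  (C : E →L[𝕜] E)

/-- The graph of `(I - C)(I + C)⁻¹`, whose points are `((I + C) g, (I - C) g)` with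
`g = (a + b) / 2`. -/
def cayleyInvGraph : Submodule 𝕜 (E × E) :=
  LinearMap.ker ((C : E →ₗ[𝕜] E) ∘ₗ (LinearMap.fst 𝕜 E E + LinearMap.snd 𝕜 E E) -
    (LinearMap.fst 𝕜 E E - LinearMap.snd 𝕜 E E))

def cayleyInv : E →ₗ.[𝕜] E := C.cayleyInvGraph.toLinearPMap

variable {C}

@[simp]
theorem mem_cayleyInvGraph {p : E × E} : p ∈ C.cayleyInvGraph ↔ C (p.1 + p.2) = p.1 - p.2 := by
  simp [cayleyInvGraph, sub_eq_zero]

theorem add_sub_mem_cayleyInvGraph (s : E) : (s + C s, s - C s) ∈ C.cayleyInvGraph := by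
  simp only [mem_cayleyInvGraph, map_add, map_sub]
  abel

theorem graph_cayleyInv (hC : ∀ x, x + C x = 0 → x = 0) : C.cayleyInv.graph = C.cayleyInvGraph :=
  Submodule.toLinearPMap_graph_eq _ fun p hp hp1 => by
    rw [mem_cayleyInvGraph, hp1, zero_add, zero_sub] at hp
    exact hC _ (by rw [hp, add_neg_cancel])

theorem le_cayleyInv_iff (hC : ∀ x, x + C x = 0 → x = 0) {S : E →ₗ.[𝕜] E} :
    S ≤ C.cayleyInv ↔ ∀ x : S.domain, C (x + S x) = x - S x := by
  rw [← LinearPMap.le_graph_iff, graph_cayleyInv hC, SetLike.le_def]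
  simp only [mem_cayleyInvGraph]
  exact LinearPMap.forall_mem_graph_iff (P := fun a b => C (a + b) = a - b)

theorem isAccretive_cayleyInv (hCnorm : ‖C‖ ≤ 1) (hC : ∀ x, x + C x = 0 → x = 0) :
    C.cayleyInv.IsAccretive := fun x => by
  refine norm_sub_le_norm_add_iff.mp ?_
  rw [← (le_cayleyInv_iff hC).mp le_rfl x]
  exact (C.le_of_opNorm_le hCnorm _).trans_eq (one_mul _)

theorem dense_domain_cayleyInv [CompleteSpace E] (hCsa : IsSelfAdjoint C)
    (hC : ∀ x, x + C x = 0 → x = 0) : Dense (C.cayleyInv.domain : Set E) := by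
  have hsymm : ∀ x y, ⟪C x, y⟫_𝕜 = ⟪x, C y⟫_𝕜 := hCsa.isSymmetric
  rw [Submodule.dense_iff_topologicalClosure_eq_top, Submodule.topologicalClosure_eq_top_iff,
    Submodule.eq_bot_iff]
  intro k hk
  refine hC k (ext_inner_left 𝕜 fun s => ?_)
  have hs : s + C s ∈ C.cayleyInv.domain :=
    LinearPMap.mem_domain_of_mem_graph (graph_cayleyInv hC ▸ add_sub_mem_cayleyInvGraph s)
  rw [inner_zero_right, inner_add_right, ← hsymm s k, ← inner_add_left]
  exact (Submodule.mem_orthogonal _ _).mp hk _ hs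

theorem isSelfAdjoint_cayleyInv [CompleteSpace E] (hCsa : IsSelfAdjoint C)
    (hC : ∀ x, x + C x = 0 → x = 0) : IsSelfAdjoint C.cayleyInv := by
  have hsymm : ∀ x y, ⟪C x, y⟫_𝕜 = ⟪x, C y⟫_𝕜 := hCsa.isSymmetric
  rw [LinearPMap.isSelfAdjoint_def]
  refine LinearPMap.eq_of_eq_graph (Submodule.ext fun ⟨k, w⟩ => ?_)
  rw [LinearPMap.mem_graph_adjoint_iff (dense_domain_cayleyInv hCsa hC), graph_cayleyInv hC,
    mem_cayleyInvGraph]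
  constructor
  · intro h
    have hkw : k - C k = w + C w := ext_inner_left 𝕜 fun s => by
      have := h _ (add_sub_mem_cayleyInvGraph s)
      simp only [inner_sub_left, inner_add_left, hsymm s] at this
      rw [inner_sub_right, inner_add_right, this]
    rw [map_add]
    linear_combination (norm := module) -hkw
  · intro h p hp
    refine (inner_sub_add_eq_inner_add_sub_iff _ _ _ _).mp ?_
    rw [← h, ← mem_cayleyInvGraph.mp hp]
    exact hsymm _ _

theorem eq_zero_of_add_apply_eq_zero [CompleteSpace E] (hCsa : IsSelfAdjoint C) {S : E →ₗ.[𝕜] E}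
    (hS : Dense (S.domain : Set E)) (hCS : ∀ x : S.domain, C (x + S x) = x - S x) {g : E}
    (hg : g + C g = 0) : g = 0 := by
  have hsymm : ∀ x y, ⟪C x, y⟫_𝕜 = ⟪x, C y⟫_𝕜 := hCsa.isSymmetric
  refine hS.eq_zero_of_inner_left (𝕜 := 𝕜) fun k hk => ?_
  lift k to S.domain using hk
  -- `⟪g + C g, k + S k⟫ = ⟪g, k + S k⟫ + ⟪g, k - S k⟫ = 2 ⟪g, k⟫`
  have h := congrArg (⟪·, (k : E) + S k⟫_𝕜) hg
  simp only [inner_add_left, inner_zero_left] at h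
  rw [hsymm g, hCS, inner_add_right, inner_sub_right] at h
  linear_combination (1 / 2 : 𝕜) * h

end ContinuousLinearMap

open LinearPMap ContinuousLinearMap in
theorem statement7 (S : H →ₗ.[ℂ] H) (hdense : Dense (S.domain : Set H)) :
    (∀ St : H →ₗ.[ℂ] H,
      (S ≤ St ∧ St.adjoint = St ∧ ∀ h : St.domain, 0 ≤ ⟪St h, (h : H)⟫_ℂ) →
      ∃! Tt : H →L[ℂ] H,
        (IsSelfAdjoint Tt ∧ ‖Tt‖ ≤ 1 ∧ ∀ h : S.domain, Tt ((h : H) + S h) = (h : H) - S h) ∧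
        ∀ h : St.domain, Tt ((h : H) + St h) = (h : H) - St h) ∧
    (∀ Tt : H →L[ℂ] H,
      (IsSelfAdjoint Tt ∧ ‖Tt‖ ≤ 1 ∧ ∀ h : S.domain, Tt ((h : H) + S h) = (h : H) - S h) →
      ∃! St : H →ₗ.[ℂ] H,
        (S ≤ St ∧ St.adjoint = St ∧ ∀ h : St.domain, 0 ≤ ⟪St h, (h : H)⟫_ℂ) ∧
        ∀ h : St.domain, Tt ((h : H) + St h) = (h : H) - St h) := by
  constructor
  · rintro St ⟨hle, hSt : IsSelfAdjoint St, hpos⟩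
    have hacc := hSt.isFormalAdjoint.isAccretive_iff.mpr hpos
    obtain ⟨C, hC, hCnorm, hCSt⟩ := exists_cayley hSt hacc
    exact ⟨C, ⟨⟨hC, hCnorm, forall_of_le hle (P := fun a b => C (a + b) = a - b) hCSt⟩, hCSt⟩,
      fun C' ⟨_, hC'St⟩ => cayley_unique hSt hacc hC'St hCSt⟩
  · rintro Tt ⟨hTt, hTnorm, hTS⟩
    have hker g := eq_zero_of_add_apply_eq_zero hTt hdense hTS (g := g)
    have hSt := isSelfAdjoint_cayleyInv hTt hker
    have hpos := hSt.isFormalAdjoint.isAccretive_iff.mp (isAccretive_cayleyInv hTnorm hker)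
    refine ⟨Tt.cayleyInv, ⟨⟨(le_cayleyInv_iff hker).mpr hTS, hSt, hpos⟩,
      (le_cayleyInv_iff hker).mp le_rfl⟩, fun St' ⟨⟨_, hSt', _⟩, hSt'Tt⟩ => ?_⟩
    exact IsSelfAdjoint.eq_of_le hSt' hSt ((le_cayleyInv_iff hker).mpr hSt'Tt)
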